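/- Let K be a field and r ≥ 1, and let Γ = K⟨α,β⟩/(α², β², (αβ)^r − (βα)^r). The center Z(Γ) has K-dimension r+3, with basis {1, (αβ)^r, (αβ)^k + (βα)^k for 1 ≤ k ≤ r−1, (αβ)^{r−1}α, (βα)^{r−1}β}. -/

import Mathlib

open FreeAlgebra

/-- Relations of `Γ(1,1;r) = K⟨α,β⟩/(α², β², (αβ)^r - (βα)^r)`. -/
def gammaRelR (K : Type*) [Field K] (r : ℕ) :
    FreeAlgebra K (Fin 2) → FreeAlgebra K (Fin 2) → Prop :=
  fun x y =>
    (x = ι K 0 * ι K 0 ∧ y = 0) ∨ (x = ι K 1 * ι K 1 ∧ y = 0) ∨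
    (x = (ι K 0 * ι K 1) ^ r ∧ y = (ι K 1 * ι K 0) ^ r)

/-- The family `1, (αβ)^k + (βα)^k (1 ≤ k ≤ r-1), (αβ)^{r-1}α, (βα)^{r-1}β, (αβ)^r`
in `Γ(1,1;r)`. -/
noncomputable def centerFam (K : Type*) [Field K] (r : ℕ) :
    Fin (r + 3) → RingQuot (gammaRelR K r) := fun i =>
  let a := RingQuot.mkAlgHom K (gammaRelR K r) (ι K 0)
  let b := RingQuot.mkAlgHom K (gammaRelR K r) (ι K 1)
  if (i : ℕ) = 0 then 1
  else if (i : ℕ) < r then (a * b) ^ (i : ℕ) + (b * a) ^ (i : ℕ)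
  else if (i : ℕ) = r then (a * b) ^ (r - 1) * a
  else if (i : ℕ) = r + 1 then (b * a) ^ (r - 1) * b
  else (a * b) ^ r

/-!
`Γ` is spanned by `1`, `ω = (αβ)^r = (βα)^r` and the alternating words of length `1, …, 2r - 1`,
since multiplying a word by a letter gives a word or `0`. These `4r` elements are independent:
`Γ` acts on formal combinations of them (the left regular representation, built by hand), and
each word sends the vector of `1` to its own vector. In these coordinates left and right
multiplication by a letter shift indices, and comparing `αx` with `xα` and `βx` with `xβ` shows
that a central `x` has no component on the words of odd length `< 2r - 1`, and equal components
on the two words of each even length `2k < 2r`. The listed family is unitriangular with respect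
to one coordinate per member, which gives independence; and a central element whose coordinates
of these `r + 3` kinds vanish is `0`, which gives spanning.
-/

namespace GammaCenter

variable {K : Type*} [Field K] {r : ℕ}

section PartialMap

variable {I : Type*} (f : I → Option I)

variable (K) in
noncomputable def partialMap : (I →₀ K) →ₗ[K] (I →₀ K) :=
  Finsupp.lift (I →₀ K) K I fun i => (f i).elim 0 fun j => Finsupp.single j 1

lemma partialMap_single_of_eq_some {i j : I} (h : f i = some j) (c : K) :
    partialMap K f (Finsupp.single i c) = Finsupp.single j c := by
  simp [partialMap, h, Finsupp.smul_single]

lemma partialMap_single_of_eq_none {i : I} (h : f i = none) (c : K) :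
    partialMap K f (Finsupp.single i c) = 0 := by
  simp [partialMap, h]

lemma partialMap_apply_of_eq_some {i j : I} (h : f i = some j)
    (hf : ∀ i', f i' = some j → i' = i) (c : I →₀ K) : partialMap K f c j = c i := by
  induction c using Finsupp.induction_linear with
  | zero => simp
  | add c d hc hd => simp only [map_add, Finsupp.add_apply, hc, hd]
  | single i' a =>
    rcases hi' : f i' with _ | j'
    · rw [partialMap_single_of_eq_none f hi', Finsupp.zero_apply,
        Finsupp.single_eq_of_ne (by rintro rfl; simp_all)]
    · rw [partialMap_single_of_eq_some f hi']
      by_cases hj : j' = j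
      · subst hj; rw [hf i' hi', Finsupp.single_eq_same, Finsupp.single_eq_same]
      · rw [Finsupp.single_eq_of_ne (Ne.symm hj), Finsupp.single_eq_of_ne]
        rintro rfl; exact hj (Option.some_injective _ (hi'.symm.trans h))

lemma partialMap_apply_of_forall_ne {j : I} (h : ∀ i, f i ≠ some j) (c : I →₀ K) :
    partialMap K f c j = 0 := by
  induction c using Finsupp.induction_linear with
  | zero => simp
  | add c d hc hd => simp only [map_add, Finsupp.add_apply, hc, hd, add_zero]
  | single i a =>
    rcases hi : f i with _ | j'
    · rw [partialMap_single_of_eq_none f hi, Finsupp.zero_apply]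
    · rw [partialMap_single_of_eq_some f hi, Finsupp.single_eq_of_ne]
      rintro rfl; exact h i hi

end PartialMap

variable (K r) in
abbrev Gamma := RingQuot (gammaRelR K r)

variable (K r) in
/-- `gen false = α`, `gen true = β`. -/
noncomputable def gen (t : Bool) : Gamma K r :=
  RingQuot.mkAlgHom K (gammaRelR K r) (ι K (if t then 1 else 0))

/-- The letter in position `n` (counting from `0`) of the alternating word beginning with `s`. -/
def letter (s : Bool) (n : ℕ) : Bool := xor s (decide (n % 2 = 1))

lemma letter_zero (s : Bool) : letter s 0 = s := by simp [letter]

lemma letter_succ (s : Bool) (n : ℕ) : letter s (n + 1) = !letter s n := by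
  rcases Nat.mod_two_eq_zero_or_one n with h | h <;> cases s <;> simp [letter, Nat.add_mod, h]

lemma letter_not (s : Bool) (n : ℕ) : letter (!s) n = !letter s n := by
  cases s <;> simp [letter]

lemma letter_of_even (s : Bool) {n : ℕ} (h : n % 2 = 0) : letter s n = s := by
  cases s <;> simp [letter, h]

lemma letter_of_odd (s : Bool) {n : ℕ} (h : n % 2 = 1) : letter s n = !s := by
  cases s <;> simp [letter, h]

variable (K r) in
noncomputable def altWord : ℕ → Bool → Gamma K r
  | 0, _ => 1
  | n + 1, s => gen K r s * altWord n (!s)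

lemma altWord_zero (s : Bool) : altWord K r 0 s = 1 := rfl

lemma altWord_succ (n : ℕ) (s : Bool) :
    altWord K r (n + 1) s = gen K r s * altWord K r n (!s) := rfl

lemma altWord_one (s : Bool) : altWord K r 1 s = gen K r s := mul_one _

lemma gen_mul_self (t : Bool) : gen K r t * gen K r t = 0 := by
  have h : gammaRelR K r (ι K (if t then 1 else 0) * ι K (if t then 1 else 0)) 0 := by
    cases t
    · exact Or.inl ⟨rfl, rfl⟩
    · exact Or.inr (Or.inl ⟨rfl, rfl⟩)
  simpa [gen] using RingQuot.mkAlgHom_rel K h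

lemma gen_mul_gen_pow_comm :
    (gen K r false * gen K r true) ^ r = (gen K r true * gen K r false) ^ r := by
  have h : gammaRelR K r ((ι K 0 * ι K 1) ^ r) ((ι K 1 * ι K 0) ^ r) :=
    Or.inr (Or.inr ⟨rfl, rfl⟩)
  simpa [gen] using RingQuot.mkAlgHom_rel K h

lemma altWord_add (n m : ℕ) (s : Bool) :
    altWord K r n s * altWord K r m (letter s n) = altWord K r (n + m) s := by
  induction n generalizing s with
  | zero => rw [letter_zero, altWord_zero, one_mul, Nat.zero_add]
  | succ n ih =>
    rw [altWord_succ, letter_succ, ← letter_not, mul_assoc, ih, ← altWord_succ,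
      Nat.succ_add]

lemma altWord_mul_gen_letter (n : ℕ) (s : Bool) :
    altWord K r n s * gen K r (letter s n) = altWord K r (n + 1) s := by
  rw [← altWord_one (K := K) (r := r), altWord_add]

lemma gen_mul_altWord_self {n : ℕ} (hn : 1 ≤ n) (t : Bool) :
    gen K r t * altWord K r n t = 0 := by
  obtain ⟨m, rfl⟩ := Nat.exists_eq_add_of_le' hn
  rw [altWord_succ, ← mul_assoc, gen_mul_self, zero_mul]

lemma altWord_mul_gen_of_ne {n : ℕ} (hn : 1 ≤ n) {s t : Bool} (ht : t ≠ letter s n) :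
    altWord K r n s * gen K r t = 0 := by
  obtain ⟨m, rfl⟩ := Nat.exists_eq_add_of_le' hn
  obtain rfl : t = letter s m := by
    rw [letter_succ] at ht
    revert ht; cases t <;> cases letter s m <;> decide
  rw [← altWord_mul_gen_letter, mul_assoc, gen_mul_self, mul_zero]

lemma altWord_mul_gen (n : ℕ) (hn : 1 ≤ n) (s t : Bool) :
    altWord K r n s * gen K r t = if t = letter s n then altWord K r (n + 1) s else 0 := by
  split_ifs with h
  · rw [h, altWord_mul_gen_letter]
  · exact altWord_mul_gen_of_ne hn h

lemma gen_mul_gen_not_pow (s : Bool) (k : ℕ) :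
    (gen K r s * gen K r (!s)) ^ k = altWord K r (2 * k) s := by
  induction k with
  | zero => rw [pow_zero, Nat.mul_zero, altWord_zero]
  | succ k ih =>
    rw [pow_succ', ih, Nat.mul_succ, altWord_succ, altWord_succ, Bool.not_not, mul_assoc]

lemma altWord_two_mul_eq (s t : Bool) : altWord K r (2 * r) s = altWord K r (2 * r) t := by
  have h := gen_mul_gen_pow_comm (K := K) (r := r)
  rw [← Bool.not_false, gen_mul_gen_not_pow, Bool.not_false, ← Bool.not_true,
    gen_mul_gen_not_pow] at h
  cases s <;> cases t <;> simp_all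

lemma altWord_eq_zero (hr : 1 ≤ r) {n : ℕ} (hn : 2 * r < n) (s : Bool) :
    altWord K r n s = 0 := by
  obtain ⟨m, rfl⟩ := Nat.exists_eq_add_of_lt hn
  have h2r : (2 * r) % 2 = 0 := Nat.mul_mod_right 2 r
  have hω : altWord K r (2 * r + 1) s = 0 := by
    rw [← altWord_mul_gen_letter, letter_of_even s h2r, altWord_two_mul_eq s (!s)]
    refine altWord_mul_gen_of_ne (by omega) ?_
    rw [letter_of_even _ h2r]
    cases s <;> decide
  rw [Nat.add_right_comm, ← altWord_add, hω, zero_mul]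

lemma induction_on {P : Gamma K r → Prop} (algebraMap : ∀ c : K, P (algebraMap K _ c))
    (gen : ∀ t, P (gen K r t)) (add : ∀ x y, P x → P y → P (x + y))
    (mul : ∀ x y, P x → P y → P (x * y)) (x : Gamma K r) : P x := by
  obtain ⟨a, rfl⟩ := RingQuot.mkAlgHom_surjective K (gammaRelR K r) x
  induction a using FreeAlgebra.induction with
  | grade0 c => simpa only [AlgHom.commutes] using algebraMap c
  | grade1 i => fin_cases i; exacts [gen false, gen true]
  | mul a b ha hb => rw [map_mul]; exact mul _ _ ha hb
  | add a b ha hb => rw [map_add]; exact add _ _ ha hb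

variable (K r) in
def words : Set (Gamma K r) := {x | ∃ n ≤ 2 * r, ∃ s, altWord K r n s = x}

lemma gen_mul_altWord_mem_span (hr : 1 ≤ r) (t s : Bool) {n : ℕ} (hn : n ≤ 2 * r) :
    gen K r t * altWord K r n s ∈ Submodule.span K (words K r) := by
  rcases Nat.eq_zero_or_pos n with rfl | hn0
  · exact Submodule.subset_span ⟨1, by omega, t, by rw [altWord_zero, mul_one, altWord_one]⟩
  by_cases hst : s = t
  · rw [hst, gen_mul_altWord_self hn0, Submodule.mem_span]
    exact fun _ _ => Submodule.zero_mem _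
  obtain rfl : s = !t := by revert hst; cases s <;> cases t <;> decide
  rw [← altWord_succ]
  by_cases hn' : n + 1 ≤ 2 * r
  · exact Submodule.subset_span ⟨n + 1, hn', t, rfl⟩
  · rw [altWord_eq_zero hr (by omega)]
    exact Submodule.zero_mem _

lemma span_words_eq_top (hr : 1 ≤ r) : Submodule.span K (words K r) = ⊤ := by
  set M := Submodule.span K (words K r)
  have hmul : ∀ x : Gamma K r, ∀ y ∈ M, x * y ∈ M := by
    refine induction_on (fun c y hy => ?_) (fun t y hy => ?_) (fun a b ha hb y hy => ?_)
      (fun a b ha hb y hy => ?_)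
    · rw [← Algebra.smul_def]; exact M.smul_mem c hy
    · induction hy using Submodule.span_induction with
      | mem x hx =>
        obtain ⟨n, hn, s, rfl⟩ := hx
        exact gen_mul_altWord_mem_span hr t s hn
      | zero => rw [mul_zero]; exact M.zero_mem
      | add x y _ _ hx hy => rw [mul_add]; exact M.add_mem hx hy
      | smul c x _ hx => rw [mul_smul_comm]; exact M.smul_mem c hx
    · rw [add_mul]; exact M.add_mem (ha y hy) (hb y hy)
    · rw [mul_assoc]; exact ha _ (hb y hy)
  refine eq_top_iff.mpr fun x _ => ?_
  simpa using hmul x 1 (Submodule.subset_span ⟨0, Nat.zero_le _, false, altWord_zero false⟩)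

/-- `word s n` stands for the alternating word of length `n + 1` beginning with `s`; these are
basis elements of `Γ` for `n + 2 ≤ 2r`, and `top` stands for `(αβ)^r = (βα)^r`. -/
inductive Idx : Type
  | one
  | top
  | word (s : Bool) (n : ℕ)
  deriving DecidableEq

open Idx

variable (r) in
def wordIdx : ℕ → Bool → Idx
  | 0, _ => one
  | n + 1, s => if n + 1 = 2 * r then top else word s n

variable (r) in
def Idx.len : Idx → ℕ
  | one => 0
  | top => 2 * r
  | word _ n => n + 1

variable (r) in
/-- Left multiplication of basis words by the letter `t`; `none` stands for the product `0`. -/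
def lstep (t : Bool) : Idx → Option Idx
  | one => some (word t 0)
  | top => none
  | word s n => if t = s ∨ 2 * r < n + 2 then none else some (wordIdx r (n + 2) t)

variable (r) in
def rstep (t : Bool) : Idx → Option Idx
  | one => some (word t 0)
  | top => none
  | word s n => if t ≠ letter s (n + 1) ∨ 2 * r < n + 2 then none else some (wordIdx r (n + 2) s)

lemma wordIdx_of_lt {n : ℕ} (hn : 0 < n) (hn' : n < 2 * r) (s : Bool) :
    wordIdx r n s = word s (n - 1) := by
  obtain ⟨m, rfl⟩ := Nat.exists_eq_add_of_le' hn
  simp [wordIdx]; omega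

lemma wordIdx_two_mul (hr : 1 ≤ r) (s : Bool) : wordIdx r (2 * r) s = top := by
  rw [show 2 * r = 2 * r - 1 + 1 by omega, wordIdx, if_pos (by omega)]

lemma lstep_wordIdx {n : ℕ} (hn : n + 1 ≤ 2 * r) (t : Bool) :
    lstep r t (wordIdx r n (!t)) = some (wordIdx r (n + 1) t) := by
  rcases n with _ | n
  · simp [wordIdx, lstep]; omega
  · simp [wordIdx, lstep, if_neg (show n + 1 ≠ 2 * r by omega)]; omega

lemma rstep_wordIdx {n : ℕ} (hn : 1 ≤ n) (hn' : n ≤ 2 * r) (s t : Bool) :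
    rstep r t (wordIdx r n s) =
      if t = letter s n ∧ n + 1 ≤ 2 * r then some (wordIdx r (n + 1) s) else none := by
  obtain ⟨m, rfl⟩ := Nat.exists_eq_add_of_le' hn
  by_cases hm : m + 1 = 2 * r
  · simp [wordIdx, rstep, hm]
  · simp only [wordIdx, rstep, if_neg hm]
    split_ifs <;> simp_all
    omega

lemma lstep_len (hr : 1 ≤ r) {t : Bool} {i j : Idx} (h : lstep r t i = some j) :
    j.len r = i.len r + 1 ∧ j.len r ≤ 2 * r := by
  cases i with
  | one => cases h; simp [Idx.len]; omega
  | top => cases h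
  | word s n =>
    simp only [lstep, wordIdx] at h
    split_ifs at h <;> cases h <;> simp [Idx.len] <;> omega

lemma lstep_lstep {t : Bool} {i j : Idx} (h : lstep r t i = some j) : lstep r t j = none := by
  cases i with
  | one => cases h; simp [lstep]
  | top => cases h
  | word s n =>
    simp only [lstep, wordIdx] at h
    split_ifs at h <;> cases h <;> simp [lstep]

variable (K r) in
noncomputable def lmul (t : Bool) : Module.End K (Idx →₀ K) := partialMap K (lstep r t)

variable (K r) in
noncomputable def rmul (t : Bool) : Module.End K (Idx →₀ K) := partialMap K (rstep r t)

lemma lmul_mul_self (t : Bool) : lmul K r t * lmul K r t = 0 := by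
  refine Finsupp.lhom_ext fun i c => ?_
  rw [Module.End.mul_apply]
  rcases h : lstep r t i with _ | j
  · simp [lmul, partialMap_single_of_eq_none _ h]
  · simp [lmul, partialMap_single_of_eq_some _ h, partialMap_single_of_eq_none _ (lstep_lstep h)]

lemma lmul_single_wordIdx {n : ℕ} (hn : n + 1 ≤ 2 * r) (t : Bool) (c : K) :
    lmul K r t (Finsupp.single (wordIdx r n (!t)) c) = Finsupp.single (wordIdx r (n + 1) t) c :=
  partialMap_single_of_eq_some _ (lstep_wordIdx hn t) c

lemma lmul_mul_lmul_not_pow_single_one (t : Bool) {k : ℕ} (hk : k ≤ r) (c : K) :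
    ((lmul K r t * lmul K r (!t)) ^ k) (Finsupp.single one c) =
      Finsupp.single (wordIdx r (2 * k) t) c := by
  induction k with
  | zero => rfl
  | succ k ih =>
    have h := lmul_single_wordIdx (K := K) (r := r) (n := 2 * k) (by omega) (!t) c
    rw [Bool.not_not] at h
    rw [pow_succ', Module.End.mul_apply, ih (by omega), Module.End.mul_apply, h,
      lmul_single_wordIdx (n := 2 * k + 1) (by omega), Nat.mul_succ]

lemma lmul_mul_lmul_not_single (hr : 1 ≤ r) (t : Bool) (i : Idx) (c : K) :
    (lmul K r t * lmul K r (!t)) (Finsupp.single i c) = 0 ∨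
      ∃ l : Idx, (lmul K r t * lmul K r (!t)) (Finsupp.single i c) = Finsupp.single l c ∧
        l.len r = i.len r + 2 ∧ l.len r ≤ 2 * r := by
  rw [Module.End.mul_apply]
  rcases h : lstep r (!t) i with _ | j
  · simp [lmul, partialMap_single_of_eq_none _ h]
  rw [show lmul K r (!t) (Finsupp.single i c) = Finsupp.single j c from
    partialMap_single_of_eq_some _ h c]
  rcases h' : lstep r t j with _ | l
  · simp [lmul, partialMap_single_of_eq_none _ h']
  · have := lstep_len hr h
    have := lstep_len hr h'
    exact Or.inr ⟨l, partialMap_single_of_eq_some _ h' c, by omega, by omega⟩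

lemma lmul_mul_lmul_not_pow_single_eq_zero (hr : 1 ≤ r) (t : Bool) {k : ℕ} (hk : 1 ≤ k)
    {i : Idx} (hi : 2 * r < i.len r + 2 * k) (c : K) :
    ((lmul K r t * lmul K r (!t)) ^ k) (Finsupp.single i c) = 0 := by
  induction k, hk using Nat.le_induction generalizing i with
  | base =>
    rcases lmul_mul_lmul_not_single hr t i c with h | ⟨l, -, hl, hl'⟩
    · rwa [pow_one]
    · omega
  | succ k hk ih =>
    rw [pow_succ, Module.End.mul_apply]
    rcases lmul_mul_lmul_not_single hr t i c with h | ⟨l, h, hl, -⟩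
    · rw [h, map_zero]
    · rw [h]
      exact ih (by omega)

lemma lmul_mul_lmul_not_pow (hr : 1 ≤ r) (t : Bool) :
    (lmul K r t * lmul K r (!t)) ^ r = Finsupp.lsingle top ∘ₗ Finsupp.lapply one := by
  refine Finsupp.lhom_ext fun i c => ?_
  rw [LinearMap.comp_apply, Finsupp.lapply_apply, Finsupp.lsingle_apply]
  by_cases hi : i = one
  · subst hi
    rw [lmul_mul_lmul_not_pow_single_one t le_rfl, Finsupp.single_eq_same, wordIdx_two_mul hr]
  · rw [Finsupp.single_eq_of_ne (Ne.symm hi), Finsupp.single_zero]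
    exact lmul_mul_lmul_not_pow_single_eq_zero hr t hr (by cases i <;> simp_all [Idx.len]; omega) c

variable (K) in
noncomputable def rep (hr : 1 ≤ r) : Gamma K r →ₐ[K] Module.End K (Idx →₀ K) :=
  RingQuot.liftAlgHom K ⟨FreeAlgebra.lift K ![lmul K r false, lmul K r true], by
    rintro x y (⟨rfl, rfl⟩ | ⟨rfl, rfl⟩ | ⟨rfl, rfl⟩)
    · simpa using lmul_mul_self false
    · simpa using lmul_mul_self true
    · simpa using (lmul_mul_lmul_not_pow hr false).trans (lmul_mul_lmul_not_pow hr true).symm⟩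

lemma rep_gen (hr : 1 ≤ r) (t : Bool) : rep K hr (gen K r t) = lmul K r t := by
  cases t <;> simp [rep, gen]

variable (K) in
/-- The coordinates of `x` in the basis of alternating words, read off from `x · 1` in the
left regular representation. -/
noncomputable def coord (hr : 1 ≤ r) : Gamma K r →ₗ[K] Idx →₀ K :=
  LinearMap.applyₗ (Finsupp.single one 1) ∘ₗ (rep K hr).toLinearMap

lemma coord_apply (hr : 1 ≤ r) (x : Gamma K r) :
    coord K hr x = rep K hr x (Finsupp.single one 1) := rfl

lemma coord_gen_mul (hr : 1 ≤ r) (t : Bool) (x : Gamma K r) :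
    coord K hr (gen K r t * x) = lmul K r t (coord K hr x) := by
  rw [coord_apply, map_mul, rep_gen, Module.End.mul_apply, coord_apply]

lemma coord_altWord (hr : 1 ≤ r) {n : ℕ} (hn : n ≤ 2 * r) (s : Bool) :
    coord K hr (altWord K r n s) = Finsupp.single (wordIdx r n s) 1 := by
  induction n generalizing s with
  | zero => simp [coord_apply, altWord_zero, wordIdx]
  | succ n ih =>
    rw [altWord_succ, coord_gen_mul, ih (by omega), lmul_single_wordIdx hn]

lemma coord_mul_gen (hr : 1 ≤ r) (t : Bool) (x : Gamma K r) :
    coord K hr (x * gen K r t) = rmul K r t (coord K hr x) := by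
  have key : coord K hr ∘ₗ LinearMap.mulRight K (gen K r t) = rmul K r t ∘ₗ coord K hr := by
    refine LinearMap.ext_on (span_words_eq_top hr) ?_
    rintro _ ⟨n, hn, s, rfl⟩
    simp only [LinearMap.comp_apply, LinearMap.mulRight_apply, coord_altWord hr hn]
    rcases Nat.eq_zero_or_pos n with rfl | hn0
    · rw [altWord_zero, one_mul, ← altWord_one, coord_altWord hr (by omega)]
      refine (partialMap_single_of_eq_some _ ?_ 1).symm
      simp [rstep, wordIdx]; omega
    rw [altWord_mul_gen n hn0, rmul]
    by_cases ht : t = letter s n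
    · by_cases hn' : n + 1 ≤ 2 * r
      · rw [if_pos ht, coord_altWord hr hn', partialMap_single_of_eq_some]
        rw [rstep_wordIdx hn0 hn, if_pos ⟨ht, hn'⟩]
      · rw [if_pos ht, altWord_eq_zero hr (by omega), map_zero,
          partialMap_single_of_eq_none]
        rw [rstep_wordIdx hn0 hn, if_neg (by tauto)]
    · rw [if_neg ht, map_zero, partialMap_single_of_eq_none]
      rw [rstep_wordIdx hn0 hn, if_neg (by tauto)]
  exact LinearMap.congr_fun key x

variable (K r) in
noncomputable def wordElt : Idx → Gamma K r
  | one => 1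
  | top => altWord K r (2 * r) false
  | word s n => if n + 2 ≤ 2 * r then altWord K r (n + 1) s else 0

lemma wordElt_wordIdx {n : ℕ} (hn : n ≤ 2 * r) (s : Bool) :
    wordElt K r (wordIdx r n s) = altWord K r n s := by
  rcases n with _ | n
  · rfl
  by_cases h : n + 1 = 2 * r
  · rw [wordIdx, if_pos h, wordElt, h, altWord_two_mul_eq false s]
  · simp only [wordIdx, if_neg h, wordElt, if_pos (show n + 2 ≤ 2 * r by omega)]

lemma linearCombination_coord (hr : 1 ≤ r) (x : Gamma K r) :
    Finsupp.linearCombination K (wordElt K r) (coord K hr x) = x := by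
  have key : Finsupp.linearCombination K (wordElt K r) ∘ₗ coord K hr = LinearMap.id := by
    refine LinearMap.ext_on (span_words_eq_top hr) ?_
    rintro _ ⟨n, hn, s, rfl⟩
    simp [coord_altWord hr hn, wordElt_wordIdx hn]
  exact LinearMap.congr_fun key x

lemma centerFam_eq (hr : 1 ≤ r) (j : Fin (r + 3)) :
    centerFam K r j =
      if (j : ℕ) = 0 then 1
      else if (j : ℕ) < r then altWord K r (2 * j) false + altWord K r (2 * j) true
      else if (j : ℕ) = r then altWord K r (2 * r - 1) false
      else if (j : ℕ) = r + 1 then altWord K r (2 * r - 1) true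
      else altWord K r (2 * r) false := by
  have hab (k : ℕ) : (gen K r false * gen K r true) ^ k = altWord K r (2 * k) false :=
    gen_mul_gen_not_pow false k
  have hba (k : ℕ) : (gen K r true * gen K r false) ^ k = altWord K r (2 * k) true :=
    gen_mul_gen_not_pow true k
  have hodd (s : Bool) : altWord K r (2 * (r - 1)) s * gen K r s = altWord K r (2 * r - 1) s := by
    rw [show 2 * r - 1 = 2 * (r - 1) + 1 by omega, ← altWord_mul_gen_letter,
      letter_of_even s (Nat.mul_mod_right 2 _)]
  have hα : RingQuot.mkAlgHom K (gammaRelR K r) (ι K 0) = gen K r false := rfl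
  have hβ : RingQuot.mkAlgHom K (gammaRelR K r) (ι K 1) = gen K r true := rfl
  simp only [centerFam, hα, hβ, hab, hba, hodd]

lemma gen_mul_altWord_of_even {m : ℕ} (hm : m % 2 = 0) (hm0 : 1 ≤ m) (s t : Bool) :
    gen K r t * altWord K r m s = altWord K r m (!s) * gen K r t := by
  obtain rfl | rfl : s = t ∨ s = !t := by cases s <;> cases t <;> decide
  · rw [gen_mul_altWord_self hm0, altWord_mul_gen_of_ne hm0]
    rw [letter_of_even _ hm]; cases s <;> decide
  · rw [Bool.not_not, ← altWord_succ, ← altWord_mul_gen_letter, letter_of_even _ hm]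

lemma commute_gen_altWord_two_mul_sub_one (hr : 1 ≤ r) (s t : Bool) :
    Commute (gen K r t) (altWord K r (2 * r - 1) s) := by
  have hm : (2 * r - 1) % 2 = 1 := by omega
  obtain rfl | rfl : s = t ∨ s = !t := by cases s <;> cases t <;> decide
  · rw [Commute, SemiconjBy, gen_mul_altWord_self (by omega),
      altWord_mul_gen_of_ne (by omega) (by rw [letter_of_odd _ hm]; cases s <;> decide)]
  · have h := altWord_mul_gen_letter (K := K) (r := r) (2 * r - 1) (!t)
    rw [letter_of_odd _ hm, Bool.not_not] at h
    rw [Commute, SemiconjBy, ← altWord_succ, h, show 2 * r - 1 + 1 = 2 * r by omega,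
      altWord_two_mul_eq t (!t)]

lemma commute_gen_altWord_two_mul (hr : 1 ≤ r) (s t : Bool) :
    Commute (gen K r t) (altWord K r (2 * r) s) := by
  rw [Commute, SemiconjBy, altWord_two_mul_eq s t, gen_mul_altWord_self (by omega),
    altWord_two_mul_eq t (!t), altWord_mul_gen_of_ne (by omega)]
  rw [letter_of_even _ (Nat.mul_mod_right 2 r)]; cases t <;> decide

lemma commute_gen_centerFam (hr : 1 ≤ r) (t : Bool) (j : Fin (r + 3)) :
    Commute (gen K r t) (centerFam K r j) := by
  rw [centerFam_eq hr]
  split_ifs with h0 hj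
  · exact Commute.one_right _
  · rw [Commute, SemiconjBy, mul_add, add_mul, gen_mul_altWord_of_even (by omega) (by omega),
      gen_mul_altWord_of_even (by omega) (by omega), Bool.not_false, Bool.not_true, add_comm]
  all_goals first
    | exact commute_gen_altWord_two_mul_sub_one hr _ t
    | exact commute_gen_altWord_two_mul hr _ t

lemma mem_center_of_commute_gen {z : Gamma K r} (h : ∀ t, Commute (gen K r t) z) :
    z ∈ Subalgebra.center K (Gamma K r) := by
  rw [Subalgebra.mem_center_iff]
  refine induction_on (fun c => Algebra.commutes c z) (fun t => (h t).eq)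
    (fun x y hx hy => ?_) (fun x y hx hy => ?_)
  · exact (Commute.add_left hx hy).eq
  · exact (Commute.mul_left hx hy).eq

lemma centerFam_mem_center (hr : 1 ≤ r) (j : Fin (r + 3)) :
    centerFam K r j ∈ Subalgebra.center K (Gamma K r) :=
  mem_center_of_commute_gen fun t => commute_gen_centerFam hr t j

variable (r) in
/-- The coordinate that detects the `j`-th element of `centerFam`. -/
def centerIdx (j : Fin (r + 3)) : Idx :=
  if (j : ℕ) = 0 then one
  else if (j : ℕ) < r then word false (2 * j - 1)
  else if (j : ℕ) = r then word false (2 * r - 2)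
  else if (j : ℕ) = r + 1 then word true (2 * r - 2)
  else top

lemma centerIdx_injective : Function.Injective (centerIdx r) := by
  intro j j' h
  have := j.isLt
  have := j'.isLt
  simp only [centerIdx] at h
  split_ifs at h <;> simp at h <;> exact Fin.ext (by omega)

lemma centerIdx_ne_word_true {j : ℕ} (hj : 0 < j) (j' : Fin (r + 3)) :
    centerIdx r j' ≠ word true (2 * j - 1) := by
  simp only [centerIdx]
  split_ifs <;> simp
  omega

lemma coord_centerFam (hr : 1 ≤ r) (j : Fin (r + 3)) :
    coord K hr (centerFam K r j) = Finsupp.single (centerIdx r j) 1 +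
      if (j : ℕ) ≠ 0 ∧ (j : ℕ) < r then Finsupp.single (word true (2 * j - 1)) 1 else 0 := by
  have := j.isLt
  rw [centerFam_eq hr, centerIdx]
  split_ifs <;> first | (exfalso; omega) | rw [add_zero] | skip
  · exact coord_altWord hr (Nat.zero_le _) false
  · rw [map_add, coord_altWord hr (by omega), coord_altWord hr (by omega),
      wordIdx_of_lt (by omega) (by omega), wordIdx_of_lt (by omega) (by omega)]
  · rw [coord_altWord hr (by omega), wordIdx_of_lt (by omega) (by omega), Nat.sub_sub]
  · rw [coord_altWord hr (by omega), wordIdx_of_lt (by omega) (by omega), Nat.sub_sub]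
  · rw [coord_altWord hr le_rfl, wordIdx_two_mul hr]

variable (K) in
noncomputable def centerCoord (hr : 1 ≤ r) : Gamma K r →ₗ[K] Fin (r + 3) → K :=
  LinearMap.pi fun j => Finsupp.lapply (centerIdx r j) ∘ₗ coord K hr

lemma centerCoord_apply (hr : 1 ≤ r) (x : Gamma K r) (j : Fin (r + 3)) :
    centerCoord K hr x j = coord K hr x (centerIdx r j) := rfl

lemma centerCoord_centerFam (hr : 1 ≤ r) (j : Fin (r + 3)) :
    centerCoord K hr (centerFam K r j) = Pi.single j 1 := by
  ext j'
  have hodd : (if (j : ℕ) ≠ 0 ∧ (j : ℕ) < r then Finsupp.single (word true (2 * j - 1)) (1 : K)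
      else 0) (centerIdx r j') = 0 := by
    split_ifs with h
    · exact Finsupp.single_eq_of_ne (centerIdx_ne_word_true (j := j) (by omega) j')
    · rfl
  rw [centerCoord_apply, coord_centerFam, Finsupp.add_apply, hodd, add_zero,
    Finsupp.single_apply, Pi.single_apply]
  simp only [(centerIdx_injective (r := r)).eq_iff, eq_comm]

lemma lmul_apply_word {n : ℕ} (hn : n + 3 ≤ 2 * r) (t : Bool) (c : Idx →₀ K) :
    lmul K r t c (word t (n + 1)) = c (word (!t) n) := by
  refine partialMap_apply_of_eq_some _ ?_ (fun i h => ?_) c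
  · simp [lstep, wordIdx]; omega
  · cases i with
    | one => simp [lstep] at h
    | top => simp [lstep] at h
    | word s m =>
      simp only [lstep, wordIdx] at h
      split_ifs at h with h1 h2 <;> simp at h
      subst h
      cases s <;> cases t <;> simp_all

lemma rmul_apply_word_of_odd {n : ℕ} (hn : n + 3 ≤ 2 * r) (hodd : n % 2 = 1) (t : Bool)
    (c : Idx →₀ K) : rmul K r t c (word t (n + 1)) = c (word t n) := by
  refine partialMap_apply_of_eq_some _ ?_ (fun i h => ?_) c
  · have : letter t (n + 1) = t := letter_of_even t (by omega)
    simp [rstep, wordIdx, this]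
    omega
  · cases i with
    | one => simp [rstep] at h
    | top => simp [rstep] at h
    | word s m =>
      simp only [rstep, wordIdx] at h
      split_ifs at h with h1 h2 <;> simp at h
      obtain ⟨rfl, rfl⟩ := h
      rfl

lemma rmul_apply_word_of_even {n : ℕ} (heven : n % 2 = 0) (t : Bool) (c : Idx →₀ K) :
    rmul K r t c (word t (n + 1)) = 0 := by
  refine partialMap_apply_of_forall_ne _ (fun i h => ?_) c
  cases i with
  | one => simp [rstep] at h
  | top => simp [rstep] at h
  | word s m =>
    simp only [rstep, wordIdx] at h
    split_ifs at h with h1 h2 <;> simp at h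
    obtain ⟨rfl, rfl⟩ := h
    rw [letter_of_odd s (by omega)] at h1
    cases s <;> simp at h1

lemma lmul_coord_eq_rmul_coord (hr : 1 ≤ r) {x : Gamma K r}
    (hx : x ∈ Subalgebra.center K (Gamma K r)) (t : Bool) :
    lmul K r t (coord K hr x) = rmul K r t (coord K hr x) := by
  rw [← coord_gen_mul, ← coord_mul_gen, Subalgebra.mem_center_iff.mp hx]

lemma coord_word_true_of_odd (hr : 1 ≤ r) {x : Gamma K r}
    (hx : x ∈ Subalgebra.center K (Gamma K r)) {n : ℕ} (hodd : n % 2 = 1)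
    (hn : n + 3 ≤ 2 * r) : coord K hr x (word true n) = coord K hr x (word false n) := by
  have h := DFunLike.congr_fun (lmul_coord_eq_rmul_coord hr hx false) (word false (n + 1))
  rwa [lmul_apply_word hn, rmul_apply_word_of_odd hn hodd] at h

lemma coord_word_of_even (hr : 1 ≤ r) {x : Gamma K r}
    (hx : x ∈ Subalgebra.center K (Gamma K r)) {n : ℕ} (heven : n % 2 = 0)
    (hn : n + 3 ≤ 2 * r) (s : Bool) : coord K hr x (word s n) = 0 := by
  have h := DFunLike.congr_fun (lmul_coord_eq_rmul_coord hr hx (!s)) (word (!s) (n + 1))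
  rwa [lmul_apply_word hn, rmul_apply_word_of_even heven, Bool.not_not] at h

lemma coord_word_eq_zero (hr : 1 ≤ r) {x : Gamma K r}
    (hx : x ∈ Subalgebra.center K (Gamma K r)) (h : centerCoord K hr x = 0) {n : ℕ}
    (hn : n + 2 ≤ 2 * r) (s : Bool) : coord K hr x (word s n) = 0 := by
  have hc (j : Fin (r + 3)) : coord K hr x (centerIdx r j) = 0 := congr_fun h j
  obtain rfl | hn3 : n = 2 * r - 2 ∨ n + 3 ≤ 2 * r := by omega
  · have hr0 : r ≠ 0 := by omega
    cases s
    · simpa [centerIdx, hr0] using hc ⟨r, by omega⟩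
    · simpa [centerIdx, hr0] using hc ⟨r + 1, by omega⟩
  rcases Nat.mod_two_eq_zero_or_one n with heven | hodd
  · exact coord_word_of_even hr hx heven hn3 s
  have hfalse : coord K hr x (word false n) = 0 := by
    have hidx : centerIdx r ⟨(n + 1) / 2, by omega⟩ = word false n := by
      simp only [centerIdx, if_neg (show (n + 1) / 2 ≠ 0 by omega),
        if_pos (show (n + 1) / 2 < r by omega), show 2 * ((n + 1) / 2) - 1 = n by omega]
    rw [← hidx, hc]
  cases s
  · exact hfalse
  · rw [coord_word_true_of_odd hr hx hodd hn3, hfalse]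

lemma eq_zero_of_mem_center_of_centerCoord_eq_zero (hr : 1 ≤ r) {x : Gamma K r}
    (hx : x ∈ Subalgebra.center K (Gamma K r)) (h : centerCoord K hr x = 0) : x = 0 := by
  have hc (j : Fin (r + 3)) : coord K hr x (centerIdx r j) = 0 := congr_fun h j
  have hterm (i : Idx) : coord K hr x i • wordElt K r i = 0 := by
    cases i with
    | one => exact smul_eq_zero_of_left (by simpa [centerIdx] using hc 0) _
    | top => exact smul_eq_zero_of_left (by simpa [centerIdx] using hc ⟨r + 2, by omega⟩) _
    | word s n =>
      by_cases hn : n + 2 ≤ 2 * r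
      · exact smul_eq_zero_of_left (coord_word_eq_zero hr hx h hn s) _
      · simp [wordElt, hn]
  rw [← linearCombination_coord hr x, Finsupp.linearCombination_apply]
  exact Finset.sum_eq_zero fun i _ => hterm i

lemma linearIndependent_centerFam (hr : 1 ≤ r) : LinearIndependent K (centerFam K r) := by
  refine LinearIndependent.of_comp (centerCoord K hr) ?_
  have h : centerCoord K hr ∘ centerFam K r = Pi.basisFun K (Fin (r + 3)) := by
    ext j : 1
    rw [Function.comp_apply, centerCoord_centerFam, Pi.basisFun_apply]
  rw [h]
  exact (Pi.basisFun K _).linearIndependent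

lemma span_centerFam (hr : 1 ≤ r) :
    Submodule.span K (Set.range (centerFam K r)) =
      Subalgebra.toSubmodule (Subalgebra.center K (Gamma K r)) := by
  refine le_antisymm (Submodule.span_le.mpr ?_) fun x hx => ?_
  · rintro _ ⟨j, rfl⟩
    exact centerFam_mem_center hr j
  rw [Subalgebra.mem_toSubmodule] at hx
  have hy : x - ∑ j, centerCoord K hr x j • centerFam K r j ∈ Subalgebra.center K (Gamma K r) :=
    sub_mem hx (sum_mem fun j _ => Subalgebra.smul_mem _ (centerFam_mem_center hr j) _)
  have hy0 : centerCoord K hr (x - ∑ j, centerCoord K hr x j • centerFam K r j) = 0 := by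
    simp [centerCoord_centerFam, ← pi_eq_sum_univ']
  rw [sub_eq_zero.mp (eq_zero_of_mem_center_of_centerCoord_eq_zero hr hy hy0)]
  exact sum_mem fun j _ => Submodule.smul_mem _ _ (Submodule.subset_span ⟨j, rfl⟩)

end GammaCenter

/-- The centre of `Γ(1,1;r)` has dimension `r+3`, with basis
`{1, (αβ)^k + (βα)^k (1 ≤ k ≤ r-1), (αβ)^{r-1}α, (βα)^{r-1}β, (αβ)^r}`. -/
theorem stmt15 (K : Type*) [Field K] (r : ℕ) (hr : 1 ≤ r) :
    Module.finrank K (Subalgebra.center K (RingQuot (gammaRelR K r))) = r + 3 ∧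
    LinearIndependent K (centerFam K r) ∧
    Submodule.span K (Set.range (centerFam K r)) =
      Subalgebra.toSubmodule (Subalgebra.center K (RingQuot (gammaRelR K r))) := by
  have hind := GammaCenter.linearIndependent_centerFam (K := K) hr
  have hspan := GammaCenter.span_centerFam (K := K) hr
  refine ⟨?_, hind, hspan⟩
  have h := finrank_span_eq_card hind
  rwa [hspan, Fintype.card_fin] at h
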